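/- For every r₀ ∈ (0,1) there exists C > 0 such that the following holds for every p: for all m ≥ 2, all r ∈ [r₀, 1 − r₀], all c ∈ (0, r₀/2), and all (β¹, …, β^m) ∈ 𝒮(m, c, r), setting a = (1/m) Σ_{i=1}^m βⁱ and ã = √p · a/‖a‖, one has |(βⁱ − a)ᵀ ã| ≤ C·p·c for every i ∈ {1, …, m}. -/

import Mathlib

/-! With `q_ij = ⟨βⁱ, βʲ⟩` we have `q_ii = p` and `|q_ij - p r| ≤ p c` for `i ≠ j`. Averaging over
`j`, each `⟨βⁱ, a⟩` lies within `p c` of `K = p r + p (1 - r) / m`, and averaging once more so does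
`‖a‖² = 𝔼ᵢ ⟨βⁱ, a⟩`. Hence `|(βⁱ - a)ᵀ a| = |⟨βⁱ, a⟩ - ‖a‖²| ≤ 2 p c`, while
`‖a‖² ≥ K - p c ≥ p r₀ / 2` bounds the normalising factor `√p / ‖a‖` by `√(2 / r₀)`;
so `C = 2 √(2 / r₀)` works. -/

open scoped BigOperators

noncomputable section

namespace TAPReg

def normSq {k : ℕ} (x : Fin k → ℝ) : ℝ := ∑ i, x i ^ 2

def dotp {k : ℕ} (x y : Fin k → ℝ) : ℝ := ∑ i, x i * y i

/-- The set `𝒮(m, c, r)`. -/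
def SSet (p m : ℕ) (c r : ℝ) : Set (Fin m → Fin p → ℝ) :=
  {B | (∀ i, normSq (B i) = p) ∧
       ∀ i j, i ≠ j → |dotp (B i) (B j) / p - r| ≤ c}

/-- The mean `a` of `β¹, …, β^m`. -/
def avg {p m : ℕ} (B : Fin m → Fin p → ℝ) : Fin p → ℝ :=
  fun j => (∑ i, B i j) / m

open Finset

lemma abs_expect_sub_expect_le {ι : Type*} {s : Finset ι} {f g : ι → ℝ} {ε : ℝ} (hε : 0 ≤ ε)
    (hfg : ∀ i ∈ s, |f i - g i| ≤ ε) : |𝔼 i ∈ s, f i - 𝔼 i ∈ s, g i| ≤ ε := by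
  rcases s.eq_empty_or_nonempty with rfl | hs
  · simpa using hε
  rw [← expect_sub_distrib]
  exact (abs_expect_le _ _).trans (expect_le hs hfg)

lemma expect_ite_eq_const {m : ℕ} (i : Fin m) (s t : ℝ) :
    𝔼 j, (if j = i then s else t) = t + (s - t) / m := by
  have hm : (m : ℝ) ≠ 0 := by have := i.pos; positivity
  have hsplit : ∀ j, (if j = i then s else t) = t + if j = i then s - t else 0 := by
    intro j; split_ifs <;> ring
  simp_rw [expect_eq_sum_div_card, card_univ, Fintype.card_fin, hsplit, sum_add_distrib,
    Fintype.sum_ite_eq', sum_const, card_univ, Fintype.card_fin, nsmul_eq_mul]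
  field_simp

lemma sqrt_div_sqrt_le {x y k : ℝ} (hy : 0 ≤ y) (hk : 0 ≤ k) (h : x ≤ k * y) :
    √x / √y ≤ √k := by
  rw [← Real.sqrt_div' x hy]
  exact Real.sqrt_le_sqrt (div_le_of_le_mul₀ hy hk h)

section Gram

variable {p m : ℕ}

lemma normSq_eq_dotp (x : Fin p → ℝ) : normSq x = dotp x x := by
  simp [normSq, dotp, sq]

lemma dotp_comm (x y : Fin p → ℝ) : dotp x y = dotp y x := by
  simp [dotp, mul_comm]

lemma dotp_avg (x : Fin p → ℝ) (B : Fin m → Fin p → ℝ) :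
    dotp x (avg B) = 𝔼 i, dotp x (B i) := by
  simp only [dotp, avg, expect_eq_sum_div_card, card_univ, Fintype.card_fin, mul_div_assoc',
    mul_sum, ← sum_div]
  rw [sum_comm]

lemma normSq_avg (B : Fin m → Fin p → ℝ) : normSq (avg B) = 𝔼 i, dotp (B i) (avg B) := by
  rw [normSq_eq_dotp, dotp_avg]
  simp_rw [dotp_comm (avg B)]

lemma dotp_sub_avg_smul_avg (B : Fin m → Fin p → ℝ) (i : Fin m) (t : ℝ) :
    dotp (fun j => B i j - avg B j) (t • avg B) = t * (dotp (B i) (avg B) - normSq (avg B)) := by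
  simp only [dotp, normSq, Pi.smul_apply, smul_eq_mul, mul_sub, mul_sum, ← sum_sub_distrib]
  exact sum_congr rfl fun j _ => by ring

variable {B : Fin m → Fin p → ℝ} {s t ε : ℝ}

lemma abs_dotp_avg_sub_le (hε : 0 ≤ ε) (hdiag : ∀ i, dotp (B i) (B i) = s)
    (hoff : ∀ i j, i ≠ j → |dotp (B i) (B j) - t| ≤ ε) (i : Fin m) :
    |dotp (B i) (avg B) - (t + (s - t) / m)| ≤ ε := by
  rw [dotp_avg, ← expect_ite_eq_const i]
  refine abs_expect_sub_expect_le hε fun j _ => ?_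
  by_cases hji : j = i
  · simpa [hji, hdiag] using hε
  · simpa [hji] using hoff i j (Ne.symm hji)

lemma abs_normSq_avg_sub_le (hε : 0 ≤ ε) (hdiag : ∀ i, dotp (B i) (B i) = s)
    (hoff : ∀ i j, i ≠ j → |dotp (B i) (B j) - t| ≤ ε) (hm : 0 < m) :
    |normSq (avg B) - (t + (s - t) / m)| ≤ ε := by
  have : Nonempty (Fin m) := ⟨⟨0, hm⟩⟩
  rw [normSq_avg, ← Fintype.expect_const (ι := Fin m) (t + (s - t) / m)]
  exact abs_expect_sub_expect_le hε fun i _ => abs_dotp_avg_sub_le hε hdiag hoff i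

lemma abs_dotp_avg_sub_normSq_avg_le (hε : 0 ≤ ε) (hdiag : ∀ i, dotp (B i) (B i) = s)
    (hoff : ∀ i j, i ≠ j → |dotp (B i) (B j) - t| ≤ ε) (i : Fin m) :
    |dotp (B i) (avg B) - normSq (avg B)| ≤ 2 * ε := by
  have hm : 0 < m := i.pos
  set K := t + (s - t) / m
  calc |dotp (B i) (avg B) - normSq (avg B)|
      = |(dotp (B i) (avg B) - K) - (normSq (avg B) - K)| := by ring_nf
    _ ≤ |dotp (B i) (avg B) - K| + |normSq (avg B) - K| := abs_sub _ _
    _ ≤ 2 * ε := by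
        linarith [abs_dotp_avg_sub_le hε hdiag hoff i, abs_normSq_avg_sub_le hε hdiag hoff hm]

end Gram

lemma dotp_self_of_mem_SSet {p m : ℕ} {c r : ℝ} {B : Fin m → Fin p → ℝ} (hB : B ∈ SSet p m c r)
    (i : Fin m) : dotp (B i) (B i) = p := by
  rw [← normSq_eq_dotp, hB.1 i]

lemma abs_dotp_sub_le_of_mem_SSet {p m : ℕ} {c r : ℝ} {B : Fin m → Fin p → ℝ}
    (hB : B ∈ SSet p m c r) {i j : Fin m} (hij : i ≠ j) : |dotp (B i) (B j) - p * r| ≤ p * c := by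
  rcases p.eq_zero_or_pos with rfl | hp
  · simp [dotp]
  have hp : (0 : ℝ) < p := Nat.cast_pos.2 hp
  calc |dotp (B i) (B j) - p * r| = p * |dotp (B i) (B j) / p - r| := by
        rw [← abs_of_pos hp, ← abs_mul, abs_of_pos hp, mul_sub, mul_div_cancel₀ _ hp.ne']
    _ ≤ p * c := by gcongr; exact hB.2 i j hij

/-- **Lemma 3.7.** For every `r₀ ∈ (0,1)` there exists `C > 0` such that for all `p`,
all `m ≥ 2`, all `r ∈ [r₀, 1 − r₀]`, all `c ∈ (0, r₀/2)` and all
`(β¹, …, β^m) ∈ 𝒮(m, c, r)`, setting `a = (1/m) Σᵢ βⁱ` and `ã = √p · a/‖a‖`, one has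
`|(βⁱ − a)ᵀ ã| ≤ C p c` for every `i`. -/
theorem centered_replica_orthogonality (r₀ : ℝ) (hr₀ : r₀ ∈ Set.Ioo (0 : ℝ) 1) :
    ∃ C : ℝ, 0 < C ∧ ∀ (p m : ℕ), 2 ≤ m →
      ∀ r ∈ Set.Icc r₀ (1 - r₀), ∀ c ∈ Set.Ioo (0 : ℝ) (r₀ / 2),
      ∀ B ∈ SSet p m c r, ∀ i : Fin m,
        |dotp (fun j => B i j - avg B j)
            ((Real.sqrt p / Real.sqrt (normSq (avg B))) • avg B)|
          ≤ C * p * c := by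
  obtain ⟨hr₀, -⟩ := hr₀
  refine ⟨2 * √(2 / r₀), by positivity, ?_⟩
  rintro p m hm r ⟨hr₀r, hr⟩ c ⟨hc0, hc⟩ B hB i
  have hε : (0 : ℝ) ≤ p * c := by positivity
  have hoff := fun i j (hij : i ≠ j) => abs_dotp_sub_le_of_mem_SSet hB hij
  have hdiag := dotp_self_of_mem_SSet hB
  have hnormSq := abs_normSq_avg_sub_le hε hdiag hoff (by omega)
  have hK : p * r₀ ≤ p * r + (p - p * r) / m := by
    have : (0 : ℝ) ≤ (p - p * r) / m := div_nonneg (by nlinarith) (Nat.cast_nonneg m)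
    nlinarith
  have hp_le : (p : ℝ) ≤ 2 / r₀ * normSq (avg B) := by
    have : p * c ≤ p * (r₀ / 2) := by gcongr
    rw [div_mul_eq_mul_div, le_div_iff₀ hr₀]
    linarith [(abs_le.1 hnormSq).1]
  rw [dotp_sub_avg_smul_avg, abs_mul, abs_of_nonneg (by positivity)]
  calc √p / √(normSq (avg B)) * |dotp (B i) (avg B) - normSq (avg B)|
      ≤ √(2 / r₀) * (2 * (p * c)) :=
        mul_le_mul (sqrt_div_sqrt_le (sum_nonneg fun _ _ => sq_nonneg _) (by positivity) hp_le)
          (abs_dotp_avg_sub_normSq_avg_le hε hdiag hoff i) (abs_nonneg _) (by positivity)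
    _ = 2 * √(2 / r₀) * p * c := by ring

end TAPReg
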